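/- Suppose F₀ ∈ C^{2,α}(B₁(0), ℝ^q), a ∈ C_0^∞(B₁(0)), v ∈ C^{3,α}(B₁(0), ℝ^q), and f ∈ C^{2,α}(B₁(0), ℝ^{n(n+1)/2}) satisfy: (i) ∂_i F₀ · v = −a Δ^{-1} N_i[a](v) for 1 ≤ i ≤ n, and (ii) ∂_i ∂_j F₀ · v = −(1/2) f_{ij} + (1/2) Δ^{-1} M_{ij}[a](v) for 1 ≤ i ≤ j ≤ n, where Δ^{-1} denotes the solution operator of the Dirichlet problem on B₁(0) with zero boundary data, N_i[a](v) = 2∂_i a (Δv·v) + a (Δv·∂_i v), and M_{ij}[a] is the operator satisfying Δ(u_{ij}^{(2)}[a](v) − u_{ij}^{(1)}[a](v)) = M_{ij}[a](v). Then F := F₀ + a² v satisfies ∂_i F · ∂_j F = ∂_i F₀ · ∂_j F₀ + a² f_{ij} for all 1 ≤ i ≤ j ≤ n on B₁(0). -/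

import Mathlib

open Metric Set

noncomputable section

/-- Sup norm of a scalar function over the open unit ball of `ℝⁿ`. -/
def supN (n : ℕ) (u : EuclideanSpace ℝ (Fin n) → ℝ) : ℝ :=
  sSup {r | ∃ x ∈ Metric.ball (0 : EuclideanSpace ℝ (Fin n)) 1, r = |u x|}

/-- `α`-Hölder seminorm over the open unit ball. -/
def hSemi (n : ℕ) (α : ℝ) (u : EuclideanSpace ℝ (Fin n) → ℝ) : ℝ :=
  sSup {r | ∃ x ∈ Metric.ball (0 : EuclideanSpace ℝ (Fin n)) 1,
    ∃ y ∈ Metric.ball (0 : EuclideanSpace ℝ (Fin n)) 1,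
      x ≠ y ∧ r = |u x - u y| / dist x y ^ α}

/-- `C^{0,α}` norm: sup norm plus Hölder seminorm. -/
def c0 (n : ℕ) (α : ℝ) (u : EuclideanSpace ℝ (Fin n) → ℝ) : ℝ :=
  supN n u + hSemi n α u

/-- Partial derivative `∂ᵢ`. -/
def pd (n : ℕ) (i : Fin n) (u : EuclideanSpace ℝ (Fin n) → ℝ) :
    EuclideanSpace ℝ (Fin n) → ℝ :=
  fun x => fderiv ℝ u x (EuclideanSpace.single i 1)

/-- Iterated partial derivative along a list of directions. -/
def pdL (n : ℕ) : List (Fin n) → (EuclideanSpace ℝ (Fin n) → ℝ) →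
    (EuclideanSpace ℝ (Fin n) → ℝ)
  | [], u => u
  | i :: l, u => pd n i (pdL n l u)

/-- The list of directions encoded by a multi-index `s`. -/
def mIdxList (n : ℕ) (s : Fin n → ℕ) : List (Fin n) :=
  (List.finRange n).flatMap fun i => List.replicate (s i) i

/-- The multi-index partial derivative `∂^s`. -/
def pdM (n : ℕ) (s : Fin n → ℕ) (u : EuclideanSpace ℝ (Fin n) → ℝ) :
    EuclideanSpace ℝ (Fin n) → ℝ :=
  pdL n (mIdxList n s) u

/-- `C^{m,α}` norm: `C^{0,α}` norm of `u` plus the `C^{0,α}` norms of all partial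
derivatives of order exactly `m`. -/
def cm (n m : ℕ) (α : ℝ) (u : EuclideanSpace ℝ (Fin n) → ℝ) : ℝ :=
  c0 n α u + ∑ s ∈ Finset.Nat.antidiagonalTuple n m, c0 n α (pdM n s u)

/-- Boundedness on the unit ball. -/
def BddBall (n : ℕ) (u : EuclideanSpace ℝ (Fin n) → ℝ) : Prop :=
  ∃ M : ℝ, ∀ x ∈ Metric.ball (0 : EuclideanSpace ℝ (Fin n)) 1, |u x| ≤ M

/-- `α`-Hölder continuity on the unit ball. -/
def HolBall (n : ℕ) (α : ℝ) (u : EuclideanSpace ℝ (Fin n) → ℝ) : Prop :=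
  ∃ H : ℝ, 0 ≤ H ∧ ∀ x ∈ Metric.ball (0 : EuclideanSpace ℝ (Fin n)) 1,
    ∀ y ∈ Metric.ball (0 : EuclideanSpace ℝ (Fin n)) 1, |u x - u y| ≤ H * dist x y ^ α

end



section G5helpers

variable {n : ℕ}

lemma G5pd_contDiff {u : EuclideanSpace ℝ (Fin n) → ℝ} (hu : ContDiff ℝ (⊤ : ℕ∞) u) (i : Fin n) :
    ContDiff ℝ (⊤ : ℕ∞) (pd n i u) :=
  (hu.fderiv_right (by simp)).clm_apply contDiff_const

lemma G5pd_comm {u : EuclideanSpace ℝ (Fin n) → ℝ} (hu : ContDiff ℝ (⊤ : ℕ∞) u) (i j : Fin n)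
    (x : EuclideanSpace ℝ (Fin n)) : pd n i (pd n j u) x = pd n j (pd n i u) x := by
  have hd : DifferentiableAt ℝ (fderiv ℝ u) x :=
    ((hu.fderiv_right (m := (⊤ : ℕ∞)) (by simp)).differentiable (by simp)).differentiableAt
  have hsym := (hu.contDiffAt (x := x)).isSymmSndFDerivAt (n := (⊤ : ℕ∞)) (by rw [minSmoothness_of_isRCLikeNormedField]; exact WithTop.coe_le_coe.mpr le_top)
  have h1 : pd n i (pd n j u) x
      = fderiv ℝ (fderiv ℝ u) x (EuclideanSpace.single i 1) (EuclideanSpace.single j 1) := by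
    show fderiv ℝ (fun y => (fderiv ℝ u y) (EuclideanSpace.single j 1)) x _ = _
    rw [fderiv_clm_apply hd (differentiableAt_const _)]
    simp
  have h2 : pd n j (pd n i u) x
      = fderiv ℝ (fderiv ℝ u) x (EuclideanSpace.single j 1) (EuclideanSpace.single i 1) := by
    show fderiv ℝ (fun y => (fderiv ℝ u y) (EuclideanSpace.single i 1)) x _ = _
    rw [fderiv_clm_apply hd (differentiableAt_const _)]
    simp
  rw [h1, h2, hsym]

lemma G5pd_congr {u w : EuclideanSpace ℝ (Fin n) → ℝ} {s : Set (EuclideanSpace ℝ (Fin n))}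
    (hs : IsOpen s) {x : EuclideanSpace ℝ (Fin n)} (hx : x ∈ s)
    (h : ∀ y ∈ s, u y = w y) (i : Fin n) : pd n i u x = pd n i w x := by
  unfold pd
  have he : u =ᶠ[nhds x] w := Filter.eventuallyEq_of_mem (hs.mem_nhds hx) h
  rw [he.fderiv_eq]

lemma G5pd_add {u w : EuclideanSpace ℝ (Fin n) → ℝ} {x : EuclideanSpace ℝ (Fin n)} (i : Fin n)
    (hu : DifferentiableAt ℝ u x) (hw : DifferentiableAt ℝ w x) :
    pd n i (fun y => u y + w y) x = pd n i u x + pd n i w x := by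
  simp [pd, fderiv_fun_add hu hw]

lemma G5pd_mul {u w : EuclideanSpace ℝ (Fin n) → ℝ} {x : EuclideanSpace ℝ (Fin n)} (i : Fin n)
    (hu : DifferentiableAt ℝ u x) (hw : DifferentiableAt ℝ w x) :
    pd n i (fun y => u y * w y) x = pd n i u x * w x + u x * pd n i w x := by
  simp [pd, fderiv_fun_mul hu hw]
  ring

lemma G5pd_neg {u : EuclideanSpace ℝ (Fin n) → ℝ} {x : EuclideanSpace ℝ (Fin n)} (i : Fin n) :
    pd n i (fun y => -(u y)) x = -pd n i u x := by
  simp [pd, fderiv_neg]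

lemma G5pd_sum {ι : Type*} (s : Finset ι) (g : ι → EuclideanSpace ℝ (Fin n) → ℝ)
    {x : EuclideanSpace ℝ (Fin n)} (h : ∀ l ∈ s, DifferentiableAt ℝ (g l) x) (i : Fin n) :
    pd n i (fun y => ∑ l ∈ s, g l y) x = ∑ l ∈ s, pd n i (g l) x := by
  simp [pd, fderiv_fun_sum h]

end G5helpers

/-- Componentwise Laplacian of the `l`-th component of a vector-valued function. -/
noncomputable def lapC (n q : ℕ) (l : Fin q)
    (v : EuclideanSpace ℝ (Fin n) → EuclideanSpace ℝ (Fin q)) :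
    EuclideanSpace ℝ (Fin n) → ℝ :=
  fun x => ∑ i : Fin n, pd n i (pd n i (fun y => v y l)) x

/-- The Günther operator `N_i[a](v) = 2 ∂ᵢa (Δv · v) + a (Δv · ∂ᵢv)`. -/
noncomputable def Nop (n q : ℕ) (a : EuclideanSpace ℝ (Fin n) → ℝ) (i : Fin n)
    (v : EuclideanSpace ℝ (Fin n) → EuclideanSpace ℝ (Fin q)) :
    EuclideanSpace ℝ (Fin n) → ℝ :=
  fun x => 2 * pd n i a x * (∑ l : Fin q, lapC n q l v x * v x l) +
    a x * (∑ l : Fin q, lapC n q l v x * pd n i (fun y => v y l) x)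

/-- `u⁽¹⁾_{ij}[a](v)` built from the potentials `wN i = Δ⁻¹ N_i[a](v)`:
`a ∂ᵢ(Δ⁻¹N_j) + a ∂ⱼ(Δ⁻¹N_i) + 3 ∂ᵢa Δ⁻¹N_j + 3 ∂ⱼa Δ⁻¹N_i`. -/
noncomputable def Gu1 (n : ℕ) (a : EuclideanSpace ℝ (Fin n) → ℝ)
    (wN : Fin n → EuclideanSpace ℝ (Fin n) → ℝ) (i j : Fin n) :
    EuclideanSpace ℝ (Fin n) → ℝ :=
  fun x => a x * pd n i (wN j) x + a x * pd n j (wN i) x +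
    3 * pd n i a x * wN j x + 3 * pd n j a x * wN i x

/-- `u⁽²⁾_{ij}[a](v) = 4 ∂ᵢa ∂ⱼa (v·v) + 2a ∂ᵢa (∂ⱼv·v) + 2a ∂ⱼa (∂ᵢv·v) + a² (∂ᵢv·∂ⱼv)`. -/
noncomputable def Gu2 (n q : ℕ) (a : EuclideanSpace ℝ (Fin n) → ℝ)
    (v : EuclideanSpace ℝ (Fin n) → EuclideanSpace ℝ (Fin q)) (i j : Fin n) :
    EuclideanSpace ℝ (Fin n) → ℝ :=
  fun x => 4 * pd n i a x * pd n j a x * (∑ l : Fin q, v x l * v x l) +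
    2 * a x * pd n i a x * (∑ l : Fin q, pd n j (fun y => v y l) x * v x l) +
    2 * a x * pd n j a x * (∑ l : Fin q, pd n i (fun y => v y l) x * v x l) +
    a x ^ 2 * (∑ l : Fin q, pd n i (fun y => v y l) x * pd n j (fun y => v y l) x)

/-- Günther's key algebraic lemma (Lemma 5.3): if `∂ᵢF₀ · v = −a Δ⁻¹N_i[a](v)` and
`∂ᵢ∂ⱼF₀ · v = −½ f_{ij} + ½ Δ⁻¹M_{ij}[a](v)` (where `Δ⁻¹M_{ij}[a](v) = u⁽²⁾_{ij} − u⁽¹⁾_{ij}`,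
since `u⁽²⁾ − u⁽¹⁾` solves the corresponding zero-boundary Dirichlet problem), then
`F := F₀ + a²v` satisfies `∂ᵢF · ∂ⱼF = ∂ᵢF₀ · ∂ⱼF₀ + a² f_{ij}` on `B₁(0)`.
Here `wN i` denotes the zero-boundary solution `Δ⁻¹ N_i[a](v)`. -/
theorem stmt10 (n q : ℕ)
    (F₀ v : EuclideanSpace ℝ (Fin n) → EuclideanSpace ℝ (Fin q))
    (a : EuclideanSpace ℝ (Fin n) → ℝ)
    (f : Fin n → Fin n → EuclideanSpace ℝ (Fin n) → ℝ)
    (wN : Fin n → EuclideanSpace ℝ (Fin n) → ℝ)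
    (hF₀ : ContDiff ℝ (⊤ : ℕ∞) F₀) (hv : ContDiff ℝ (⊤ : ℕ∞) v) (ha : ContDiff ℝ (⊤ : ℕ∞) a)
    (hf : ∀ i j : Fin n, ContDiff ℝ (⊤ : ℕ∞) (f i j))
    (hwN : ∀ i : Fin n, ContDiff ℝ (⊤ : ℕ∞) (wN i))
    (hsupp : tsupport a ⊆ Metric.ball (0 : EuclideanSpace ℝ (Fin n)) 1)
    (hwN_eq : ∀ i : Fin n, ∀ x ∈ Metric.ball (0 : EuclideanSpace ℝ (Fin n)) 1,
      (∑ k : Fin n, pd n k (pd n k (wN i)) x) = Nop n q a i v x)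
    (hwN_bc : ∀ i : Fin n, ∀ x ∈ Metric.sphere (0 : EuclideanSpace ℝ (Fin n)) 1, wN i x = 0)
    (hfirst : ∀ i : Fin n, ∀ x ∈ Metric.ball (0 : EuclideanSpace ℝ (Fin n)) 1,
      (∑ l : Fin q, pd n i (fun y => F₀ y l) x * v x l) = -(a x * wN i x))
    (hsecond : ∀ i j : Fin n, i ≤ j →
      ∀ x ∈ Metric.ball (0 : EuclideanSpace ℝ (Fin n)) 1,
        (∑ l : Fin q, pd n i (pd n j (fun y => F₀ y l)) x * v x l) =
          -(1 / 2) * f i j x + (1 / 2) * (Gu2 n q a v i j x - Gu1 n a wN i j x)) :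
    ∀ i j : Fin n, i ≤ j →
      ∀ x ∈ Metric.ball (0 : EuclideanSpace ℝ (Fin n)) 1,
        (∑ l : Fin q, pd n i (fun y => F₀ y l + a y ^ 2 * v y l) x *
            pd n j (fun y => F₀ y l + a y ^ 2 * v y l) x) =
          (∑ l : Fin q, pd n i (fun y => F₀ y l) x * pd n j (fun y => F₀ y l) x) +
            a x ^ 2 * f i j x := by
  intro i j hij x hx
  have hFl : ∀ l : Fin q, ContDiff ℝ (⊤ : ℕ∞) (fun y => F₀ y l) := fun l => contDiff_euclidean.mp hF₀ l
  have hvl : ∀ l : Fin q, ContDiff ℝ (⊤ : ℕ∞) (fun y => v y l) := fun l => contDiff_euclidean.mp hv l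
  have dA : DifferentiableAt ℝ a x := (ha.differentiable (by simp)) x
  have dF : ∀ l : Fin q, DifferentiableAt ℝ (fun y => F₀ y l) x :=
    fun l => ((hFl l).differentiable (by simp)) x
  have dv : ∀ l : Fin q, DifferentiableAt ℝ (fun y => v y l) x :=
    fun l => ((hvl l).differentiable (by simp)) x
  have dA2 : DifferentiableAt ℝ (fun y => a y ^ 2) x := dA.pow 2
  have dpF : ∀ (k : Fin n) (l : Fin q), DifferentiableAt ℝ (pd n k (fun y => F₀ y l)) x :=
    fun k l => ((G5pd_contDiff (hFl l) k).differentiable (by simp)) x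
  have dw : ∀ m : Fin n, DifferentiableAt ℝ (wN m) x :=
    fun m => ((hwN m).differentiable (by simp)) x
  -- derivative of a^2
  have h2 : ∀ k : Fin n, pd n k (fun y => a y ^ 2) x = 2 * a x * pd n k a x := by
    intro k
    have hrw : (fun y : EuclideanSpace ℝ (Fin n) => a y ^ 2) = fun y => a y * a y := by
      funext y; ring
    rw [hrw, G5pd_mul k dA dA]; ring
  -- expansion of the first derivatives of F = F₀ + a² v
  have hterm : ∀ (k : Fin n) (l : Fin q),
      pd n k (fun y => F₀ y l + a y ^ 2 * v y l) x
        = pd n k (fun y => F₀ y l) x + (2 * a x * pd n k a x) * v x l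
          + a x ^ 2 * pd n k (fun y => v y l) x := by
    intro k l
    rw [G5pd_add k (dF l) (dA2.fun_mul (dv l)), G5pd_mul k dA2 (dv l), h2 k]
    ring
  -- differentiating Günther's first identity
  have key : ∀ k m : Fin n,
      (∑ l : Fin q, pd n k (pd n m (fun y => F₀ y l)) x * v x l)
        + (∑ l : Fin q, pd n m (fun y => F₀ y l) x * pd n k (fun y => v y l) x)
      = -(pd n k a x * wN m x + a x * pd n k (wN m) x) := by
    intro k m
    have h1 : pd n k (fun y => ∑ l : Fin q, pd n m (fun y' => F₀ y' l) y * v y l) x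
        = pd n k (fun y => -(a y * wN m y)) x := by
      refine G5pd_congr Metric.isOpen_ball hx (fun y hy => ?_) k
      simpa using hfirst m y hy
    have hL : pd n k (fun y => ∑ l : Fin q, pd n m (fun y' => F₀ y' l) y * v y l) x
        = ∑ l : Fin q, (pd n k (pd n m (fun y => F₀ y l)) x * v x l
            + pd n m (fun y => F₀ y l) x * pd n k (fun y => v y l) x) := by
      rw [G5pd_sum _ _ (fun l _ => (dpF m l).fun_mul (dv l)) k]
      exact Finset.sum_congr rfl fun l _ => G5pd_mul k (dpF m l) (dv l)
    have hR : pd n k (fun y => -(a y * wN m y)) x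
        = -(pd n k a x * wN m x + a x * pd n k (wN m) x) := by
      rw [G5pd_neg, G5pd_mul k dA (dw m)]
    rw [hL, hR, Finset.sum_add_distrib] at h1
    exact h1
  have E1 := key j i
  have E2 := key i j
  have hcomm : ∀ l : Fin q, pd n j (pd n i (fun y => F₀ y l)) x
      = pd n i (pd n j (fun y => F₀ y l)) x := fun l => G5pd_comm (hFl l) j i x
  simp only [hcomm] at E1
  have HS := hsecond i j hij x hx
  have HFi := hfirst i x hx
  have HFj := hfirst j x hx
  simp only [Gu1, Gu2] at HS
  have LHSeq :
      (∑ l : Fin q, pd n i (fun y => F₀ y l + a y ^ 2 * v y l) x *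
          pd n j (fun y => F₀ y l + a y ^ 2 * v y l) x)
      = (∑ l : Fin q, pd n i (fun y => F₀ y l) x * pd n j (fun y => F₀ y l) x)
        + (2 * a x * pd n j a x) * (∑ l : Fin q, pd n i (fun y => F₀ y l) x * v x l)
        + (2 * a x * pd n i a x) * (∑ l : Fin q, pd n j (fun y => F₀ y l) x * v x l)
        + a x ^ 2 * (∑ l : Fin q, pd n i (fun y => F₀ y l) x * pd n j (fun y => v y l) x)
        + a x ^ 2 * (∑ l : Fin q, pd n j (fun y => F₀ y l) x * pd n i (fun y => v y l) x)
        + (2 * a x * pd n i a x) * (2 * a x * pd n j a x) * (∑ l : Fin q, v x l * v x l)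
        + (2 * a x * pd n i a x) * a x ^ 2 *
            (∑ l : Fin q, pd n j (fun y => v y l) x * v x l)
        + (2 * a x * pd n j a x) * a x ^ 2 *
            (∑ l : Fin q, pd n i (fun y => v y l) x * v x l)
        + a x ^ 2 * a x ^ 2 *
            (∑ l : Fin q, pd n i (fun y => v y l) x * pd n j (fun y => v y l) x) := by
    rw [Finset.sum_congr rfl fun l _ => by rw [hterm i l, hterm j l]]
    simp only [Finset.mul_sum, ← Finset.sum_add_distrib]
    exact Finset.sum_congr rfl fun l _ => by ring
  rw [LHSeq]
  linear_combination (2 * a x * pd n j a x) * HFi + (2 * a x * pd n i a x) * HFj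
    + (a x ^ 2) * E1 + (a x ^ 2) * E2 + (-2 * a x ^ 2) * HS
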